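/- arXiv:2108.07867 — 5 statements merged into one kernel-verified Lean document; each statement's English description precedes it below -/
import Mathlib

section
/- Let 1 ≤ ℓ ≤ k ≤ v be integers. If there exists a (v,k,ℓ)-configuration, i.e., a family B of subsets of Fin v, each of cardinality k, such that every subset of Fin v of cardinality ℓ is contained in exactly one member of B, then for every h with 0 ≤ h ≤ ℓ−1, the binomial coefficient C(k−h, ℓ−h) divides the binomial coefficient C(v−h, ℓ−h). -/
/-- A `(v,k,ℓ)`-configuration: a family of `k`-element blocks in `Fin v` such that
every `ℓ`-element subset is contained in exactly one block. -/
def IsConfiguration (v k ℓ : ℕ) (B : Finset (Finset (Fin v))) : Prop :=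
  (∀ b ∈ B, b.card = k) ∧
  ∀ t : Finset (Fin v), t.card = ℓ → ∃! b, b ∈ B ∧ t ⊆ b

/-- Counting supersets of a fixed set `S` inside `A` of a given size. -/
lemma count_supersets {α : Type*} [DecidableEq α] (A S : Finset α) (hSA : S ⊆ A)
    (m : ℕ) (hm : S.card ≤ m) :
    ((A.powersetCard m).filter (fun t => S ⊆ t)).card
      = (A.card - S.card).choose (m - S.card) := by
  rw [← Finset.card_sdiff_of_subset hSA, ← Finset.card_powersetCard]
  apply Finset.card_bij (fun t _ => t \ S)
  · intro t ht
    simp only [Finset.mem_filter, Finset.mem_powersetCard] at ht ⊢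
    refine ⟨Finset.sdiff_subset_sdiff ht.1.1 le_rfl, ?_⟩
    rw [Finset.card_sdiff_of_subset ht.2, ht.1.2]
  · intro t ht t' ht' h
    simp only [Finset.mem_filter, Finset.mem_powersetCard] at ht ht'
    have h1 : t \ S ∪ S = t' \ S ∪ S := by rw [h]
    rwa [Finset.sdiff_union_of_subset ht.2, Finset.sdiff_union_of_subset ht'.2] at h1
  · intro u hu
    simp only [Finset.mem_powersetCard] at hu
    refine ⟨u ∪ S, ?_, ?_⟩
    · simp only [Finset.mem_filter, Finset.mem_powersetCard]
      have hdisj : Disjoint u S := Finset.disjoint_of_subset_left hu.1 Finset.sdiff_disjoint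
      refine ⟨⟨Finset.union_subset (hu.1.trans Finset.sdiff_subset) hSA, ?_⟩,
        Finset.subset_union_right⟩
      rw [Finset.card_union_of_disjoint hdisj, hu.2]
      omega
    · have hdisj : Disjoint u S := Finset.disjoint_of_subset_left hu.1 Finset.sdiff_disjoint
      rw [Finset.union_sdiff_right, Finset.sdiff_eq_self_of_disjoint hdisj]

/-- Necessity of the divisibility conditions: if a `(v,k,ℓ)`-configuration exists
(with `1 ≤ ℓ ≤ k ≤ v`), then `C(k-h, ℓ-h) ∣ C(v-h, ℓ-h)` for all `0 ≤ h ≤ ℓ-1`. -/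
theorem config_divisibility (v k ℓ : ℕ) (hℓ : 1 ≤ ℓ) (hk : ℓ ≤ k) (hv : k ≤ v)
    (B : Finset (Finset (Fin v))) (hB : IsConfiguration v k ℓ B) :
    ∀ h : ℕ, h ≤ ℓ - 1 → Nat.choose (k - h) (ℓ - h) ∣ Nat.choose (v - h) (ℓ - h) := by
  classical
  intro h hh
  have hhℓ : h ≤ ℓ := by omega
  -- pick a set S of size h
  obtain ⟨S, hS⟩ : ∃ S : Finset (Fin v), S.card = h := by
    obtain ⟨S, -, hS⟩ := Finset.exists_subset_card_eq
      (s := (Finset.univ : Finset (Fin v))) (n := h)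
      (by simp [Finset.card_univ]; omega)
    exact ⟨S, hS⟩
  -- the set of ℓ-subsets containing S
  set T := ((Finset.univ : Finset (Fin v)).powersetCard ℓ).filter (fun t => S ⊆ t) with hT
  have hTcard : T.card = (v - h).choose (ℓ - h) := by
    rw [hT, count_supersets _ _ (Finset.subset_univ S) ℓ (by omega), Finset.card_univ,
      Fintype.card_fin, hS]
  -- the function sending an ℓ-set to its unique block
  set g : Finset (Fin v) → Finset (Fin v) :=
    fun t => if ht : ∃! b, b ∈ B ∧ t ⊆ b then ht.exists.choose else ∅ with hg
  set B' := B.filter (fun b => S ⊆ b) with hB'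
  have hgmem : ∀ t ∈ T, g t ∈ B' := by
    intro t ht
    simp only [hT, Finset.mem_filter, Finset.mem_powersetCard] at ht
    have hu := hB.2 t ht.1.2
    have hspec := hu.exists.choose_spec
    simp only [hg, dif_pos hu, hB', Finset.mem_filter]
    exact ⟨hspec.1, ht.2.trans hspec.2⟩
  have key : T.card = ∑ b ∈ B', (T.filter (fun t => g t = b)).card :=
    Finset.card_eq_sum_card_fiberwise hgmem
  have fiber : ∀ b ∈ B', (T.filter (fun t => g t = b)).card = (k - h).choose (ℓ - h) := by
    intro b hb
    simp only [hB', Finset.mem_filter] at hb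
    have hbk : b.card = k := hB.1 b hb.1
    have : T.filter (fun t => g t = b) = (b.powersetCard ℓ).filter (fun t => S ⊆ t) := by
      ext t
      simp only [hT, Finset.mem_filter, Finset.mem_powersetCard, Finset.subset_univ,
        true_and]
      constructor
      · rintro ⟨⟨htℓ, hSt⟩, hgt⟩
        have hu := hB.2 t htℓ
        have hspec := hu.exists.choose_spec
        rw [hg] at hgt
        simp only [dif_pos hu] at hgt
        exact ⟨⟨hgt ▸ hspec.2, htℓ⟩, hSt⟩
      · rintro ⟨⟨htb, htℓ⟩, hSt⟩
        have hu := hB.2 t htℓ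
        have hspec := hu.exists.choose_spec
        refine ⟨⟨htℓ, hSt⟩, ?_⟩
        rw [hg]
        simp only [dif_pos hu]
        exact hu.unique hspec ⟨hb.1, htb⟩
    rw [this, count_supersets b S hb.2 ℓ (by omega), hbk, hS]
  rw [Finset.sum_congr rfl fiber, Finset.sum_const, smul_eq_mul] at key
  exact ⟨B'.card, by rw [← hTcard, key, mul_comm]⟩
end

section
/- (Existence of Steiner triple systems.) For every integer v ≥ 1, there exists a family B of subsets of Fin v, each of cardinality 3, such that every subset of Fin v of cardinality 2 is contained in exactly one member of B, if and only if v ≡ 1 (mod 6) or v ≡ 3 (mod 6). Equivalently, the complete graph K_v factors into edge-disjoint 3-cycles exactly for these v. -/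
section Quasi
variable {α : Type} [Fintype α] [DecidableEq α]

theorem sts_of_quasigroup (f : α → α → α)
    (hcomm : ∀ x y, f x y = f y x) (hidem : ∀ x, f x x = x)
    (hinv : ∀ x y, f x (f x y) = y) :
    ∃ B : Finset (Finset α), (∀ b ∈ B, b.card = 3) ∧
      ∀ t : Finset α, t.card = 2 → ∃! b, b ∈ B ∧ t ⊆ b := by
  have hne1 : ∀ x y : α, x ≠ y → f x y ≠ x := by
    intro x y hxy h
    apply hxy
    have h2 := hinv x y
    rw [h, hidem] at h2
    exact h2
  have hne2 : ∀ x y : α, x ≠ y → f x y ≠ y := by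
    intro x y hxy h
    exact hne1 y x (Ne.symm hxy) (by rw [hcomm]; exact h)
  have hcard : ∀ x y : α, x ≠ y → ({x, y, f x y} : Finset α).card = 3 := by
    intro x y hxy
    rw [Finset.card_insert_of_notMem, Finset.card_insert_of_notMem, Finset.card_singleton]
    · simp [Ne.symm (hne2 x y hxy)]
    · simp [hxy, Ne.symm (hne1 x y hxy)]
  -- closure
  have hclos : ∀ a c x y : α, a ≠ c → x ∈ ({a, c, f a c} : Finset α) →
      y ∈ ({a, c, f a c} : Finset α) → f x y ∈ ({a, c, f a c} : Finset α) := by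
    intro a c x y _ hx hy
    have e1 : f a (f a c) = c := hinv a c
    have e2 : f c (f a c) = a := by rw [hcomm a c]; exact hinv c a
    have e3 : f (f a c) a = c := by rw [hcomm]; exact e1
    have e4 : f (f a c) c = a := by rw [hcomm]; exact e2
    have e5 : f c a = f a c := hcomm c a
    simp only [Finset.mem_insert, Finset.mem_singleton] at hx hy ⊢
    rcases hx with rfl | rfl | rfl <;> rcases hy with rfl | rfl | rfl <;>
      simp [hidem, e1, e2, e3, e4, e5]
  refine ⟨Finset.image (fun p : α × α => ({p.1, p.2, f p.1 p.2} : Finset α))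
      (Finset.univ.filter (fun p => p.1 ≠ p.2)), ?_, ?_⟩
  · intro b hb
    simp only [Finset.mem_image, Finset.mem_filter, Finset.mem_univ, true_and] at hb
    obtain ⟨⟨x, y⟩, hxy, rfl⟩ := hb
    exact hcard x y hxy
  · intro s hs
    obtain ⟨x, y, hxy, rfl⟩ := Finset.card_eq_two.mp hs
    refine ⟨{x, y, f x y}, ⟨?_, ?_⟩, ?_⟩
    · simp only [Finset.mem_image, Finset.mem_filter, Finset.mem_univ, true_and]
      exact ⟨(x, y), hxy, rfl⟩
    · intro z hz
      simp only [Finset.mem_insert, Finset.mem_singleton] at hz ⊢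
      tauto
    · rintro b ⟨hb, hsub⟩
      simp only [Finset.mem_image, Finset.mem_filter, Finset.mem_univ, true_and] at hb
      obtain ⟨⟨a, c⟩, hac, rfl⟩ := hb
      simp only at hac ⊢
      have hx : x ∈ ({a, c, f a c} : Finset α) := hsub (by simp)
      have hy : y ∈ ({a, c, f a c} : Finset α) := hsub (by simp)
      have hf : f x y ∈ ({a, c, f a c} : Finset α) := hclos a c x y hac hx hy
      have hsub2 : ({x, y, f x y} : Finset α) ⊆ {a, c, f a c} := by
        intro z hz
        simp only [Finset.mem_insert, Finset.mem_singleton] at hz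
        rcases hz with rfl | rfl | rfl <;> assumption
      exact (Finset.eq_of_subset_of_card_le hsub2
        (by rw [hcard a c hac, hcard x y hxy])).symm
end Quasi

theorem sts_necessary (v : ℕ) (hv : 1 ≤ v) (B : Finset (Finset (Fin v)))
    (hB3 : ∀ b ∈ B, b.card = 3)
    (hB2 : ∀ t : Finset (Fin v), t.card = 2 → ∃! b, b ∈ B ∧ t ⊆ b) :
    v % 6 = 1 ∨ v % 6 = 3 := by
  -- uniqueness helper
  have huniq : ∀ (t : Finset (Fin v)), t.card = 2 → ∀ b b', b ∈ B → b' ∈ B →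
      t ⊆ b → t ⊆ b' → b = b' := by
    intro t ht b b' hb hb' hsb hsb'
    obtain ⟨c, -, hc⟩ := hB2 t ht
    rw [hc b ⟨hb, hsb⟩, hc b' ⟨hb', hsb'⟩]
  -- Step 1 : v is odd
  have hodd : v % 2 = 1 := by
    set x : Fin v := ⟨0, hv⟩ with hx
    set S := B.filter (fun b => x ∈ b) with hS
    have hdisj : ∀ b ∈ S, ∀ b' ∈ S, b ≠ b' →
        Disjoint (b.erase x) (b'.erase x) := by
      intro b hb b' hb' hne
      simp only [hS, Finset.mem_filter] at hb hb'
      rw [Finset.disjoint_left]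
      intro y hy hy'
      have hyx : y ≠ x := Finset.ne_of_mem_erase hy
      apply hne
      apply huniq {x, y} (Finset.card_pair (Ne.symm hyx)) b b' hb.1 hb'.1
      · intro z hz
        simp only [Finset.mem_insert, Finset.mem_singleton] at hz
        rcases hz with rfl | rfl
        · exact hb.2
        · exact Finset.mem_of_mem_erase hy
      · intro z hz
        simp only [Finset.mem_insert, Finset.mem_singleton] at hz
        rcases hz with rfl | rfl
        · exact hb'.2
        · exact Finset.mem_of_mem_erase hy'
    have hcover : Finset.univ.erase x = S.biUnion (fun b => b.erase x) := by
      ext y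
      simp only [Finset.mem_erase, Finset.mem_univ, and_true, Finset.mem_biUnion, hS,
        Finset.mem_filter]
      constructor
      · intro hyx
        obtain ⟨b, ⟨hb, hsb⟩, -⟩ := hB2 {x, y} (Finset.card_pair (Ne.symm hyx))
        exact ⟨b, ⟨hb, hsb (by simp)⟩, hyx, hsb (by simp)⟩
      · rintro ⟨b, -, hy⟩
        exact hy.1
    have hc1 : (Finset.univ.erase x).card = v - 1 := by
      rw [Finset.card_erase_of_mem (Finset.mem_univ x)]
      simp
    have hc2 : (S.biUnion (fun b => b.erase x)).card = 2 * S.card := by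
      rw [Finset.card_biUnion hdisj]
      rw [Finset.sum_congr rfl (fun b hb => ?_), Finset.sum_const, smul_eq_mul, mul_comm]
      simp only [hS, Finset.mem_filter] at hb
      rw [Finset.card_erase_of_mem hb.2, hB3 b hb.1]
    have : v - 1 = 2 * S.card := by rw [← hc1, hcover, hc2]
    omega
  -- Step 2 : 3 ∣ choose v 2
  have h3 : 3 ∣ Nat.choose v 2 := by
    have hdisj : ∀ b ∈ B, ∀ b' ∈ B, b ≠ b' →
        Disjoint (b.powersetCard 2) (b'.powersetCard 2) := by
      intro b hb b' hb' hne
      rw [Finset.disjoint_left]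
      intro t ht ht'
      rw [Finset.mem_powersetCard] at ht ht'
      exact hne (huniq t ht.2 b b' hb hb' ht.1 ht'.1)
    have hcover : (Finset.univ : Finset (Fin v)).powersetCard 2 =
        B.biUnion (fun b => b.powersetCard 2) := by
      ext t
      simp only [Finset.mem_powersetCard_univ, Finset.mem_biUnion, Finset.mem_powersetCard]
      constructor
      · rintro ⟨-, ht⟩
        obtain ⟨b, ⟨hb, hsb⟩, -⟩ := hB2 t ht
        exact ⟨b, hb, hsb, ht⟩
      · rintro ⟨b, -, -, ht⟩
        exact ⟨Finset.subset_univ t, ht⟩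
    have hc1 : ((Finset.univ : Finset (Fin v)).powersetCard 2).card = Nat.choose v 2 := by
      rw [Finset.card_powersetCard]
      simp
    have hc2 : (B.biUnion (fun b => b.powersetCard 2)).card = 3 * B.card := by
      rw [Finset.card_biUnion hdisj]
      rw [Finset.sum_congr rfl (fun b hb => ?_), Finset.sum_const, smul_eq_mul, mul_comm]
      rw [Finset.card_powersetCard, hB3 b hb]
      rfl
    rw [← hc1, hcover, hc2]
    exact ⟨B.card, rfl⟩
  -- Step 3 : arithmetic
  obtain ⟨k, hk⟩ := h3
  rw [Nat.choose_two_right] at hk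
  have h2 : 2 ∣ v * (v - 1) := Dvd.dvd.mul_left ⟨(v-1)/2, by omega⟩ v
  have hvv : v * (v - 1) = 6 * k := by omega
  have hmod : v * (v - 1) % 6 = (v % 6) * ((v - 1) % 6) % 6 := Nat.mul_mod _ _ _
  have h5 : v % 6 = 1 ∨ v % 6 = 3 ∨ v % 6 = 5 := by omega
  rcases h5 with h | h | h
  · exact Or.inl h
  · exact Or.inr h
  · exfalso
    have h4 : (v - 1) % 6 = 4 := by omega
    rw [hvv, h, h4] at hmod
    omega

def boseF (n : ℕ) (m : ZMod n) : ZMod n × ZMod 3 → ZMod n × ZMod 3 → ZMod n × ZMod 3 :=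
  fun p q =>
    if q.2 = p.2 then
      (if q.1 = p.1 then p else ((p.1 + q.1) * m, p.2 + 1))
    else if q.2 = p.2 + 1 then
      (if q.1 = p.1 then (p.1, p.2 + 2) else (2 * q.1 - p.1, p.2))
    else
      (if q.1 = p.1 then (p.1, p.2 + 1) else (2 * p.1 - q.1, q.2))

theorem bose_comm (n : ℕ) (m : ZMod n) (p q : ZMod n × ZMod 3) :
    boseF n m p q = boseF n m q p := by
  obtain ⟨x, i⟩ := p
  obtain ⟨y, j⟩ := q
  have htri : ∀ i j : ZMod 3, j = i ∨ j = i + 1 ∨ j = i + 2 := by decide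
  have A1 : ∀ i : ZMod 3, ¬(i + 1 = i) := by decide
  have A2 : ∀ i : ZMod 3, ¬(i + 2 = i) := by decide
  have A3 : ∀ i : ZMod 3, ¬(i = i + 1) := by decide
  have A4 : ∀ i : ZMod 3, ¬(i = i + 1 + 1) := by decide
  have C1 : (2 : ZMod 3) ≠ 0 := by decide
  have C2 : (2 : ZMod 3) ≠ 1 := by decide
  have C3 : (1 : ZMod 3) ≠ 0 := by decide
  have C4 : (1 : ZMod 3) ≠ 2 := by decide
  have C5 : (0 : ZMod 3) ≠ 1 := by decide
  have C6 : (0 : ZMod 3) ≠ 2 := by decide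
  have B1 : ∀ i : ZMod 3, i + 1 + 1 = i + 2 := by decide
  have B2 : ∀ i : ZMod 3, i + 2 + 1 = i := by decide
  have B3 : ∀ i : ZMod 3, i + 2 + 2 = i + 1 := by decide
  have L : ∀ z w : ZMod n, z ≠ w → (¬ z = w ∧ ¬ w = z) := fun z w h => ⟨h, Ne.symm h⟩
  rcases htri i j with rfl | rfl | rfl <;> by_cases hxy : y = x
  · subst hxy
    simp [boseF, A1, A2, A3, A4, B1, B2, B3, C1, C2, C3, C4, C5, C6]
  · simp [boseF, (L y x hxy).1, (L y x hxy).2, add_comm x y,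
      A1, A2, A3, A4, B1, B2, B3, C1, C2, C3, C4, C5, C6]
  · subst hxy
    simp [boseF, A1, A2, A3, A4, B1, B2, B3, C1, C2, C3, C4, C5, C6]
  · simp [boseF, (L y x hxy).1, (L y x hxy).2,
      A1, A2, A3, A4, B1, B2, B3, C1, C2, C3, C4, C5, C6]
  · subst hxy
    simp [boseF, A1, A2, A3, A4, B1, B2, B3, C1, C2, C3, C4, C5, C6]
  · simp [boseF, (L y x hxy).1, (L y x hxy).2,
      A1, A2, A3, A4, B1, B2, B3, C1, C2, C3, C4, C5, C6]

theorem bose_idem (n : ℕ) (m : ZMod n) (p : ZMod n × ZMod 3) : boseF n m p p = p := by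
  obtain ⟨x, i⟩ := p
  simp [boseF]

theorem bose_inv (n : ℕ) (m : ZMod n) (hm : 2 * m = 1) (p q : ZMod n × ZMod 3) :
    boseF n m p (boseF n m p q) = q := by
  obtain ⟨x, i⟩ := p
  obtain ⟨y, j⟩ := q
  have htri : ∀ i j : ZMod 3, j = i ∨ j = i + 1 ∨ j = i + 2 := by decide
  have A1 : ∀ i : ZMod 3, ¬(i + 1 = i) := by decide
  have A2 : ∀ i : ZMod 3, ¬(i + 2 = i) := by decide
  have A3 : ∀ i : ZMod 3, ¬(i = i + 1) := by decide
  have A4 : ∀ i : ZMod 3, ¬(i = i + 1 + 1) := by decide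
  have A5 : ∀ i : ZMod 3, ¬(i + 2 = i + 1) := by decide
  have B1 : ∀ i : ZMod 3, i + 1 + 1 = i + 2 := by decide
  have B2 : ∀ i : ZMod 3, i + 2 + 1 = i := by decide
  have B3 : ∀ i : ZMod 3, i + 2 + 2 = i + 1 := by decide
  have C1 : (2 : ZMod 3) ≠ 0 := by decide
  have C2 : (2 : ZMod 3) ≠ 1 := by decide
  have C3 : (1 : ZMod 3) ≠ 0 := by decide
  have C4 : (1 : ZMod 3) ≠ 2 := by decide
  have C5 : (0 : ZMod 3) ≠ 1 := by decide
  have C6 : (0 : ZMod 3) ≠ 2 := by decide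
  rcases htri i j with rfl | rfl | rfl <;> by_cases hxy : y = x
  · subst hxy
    simp [boseF]
  · have hg : ¬((x + y) * m = x) := fun h => hxy (by linear_combination 2*h - (x+y)*hm)
    simp [boseF, hxy, hg, A1, A2, A3, A4, A5, B1, B2, B3, C1, C2, C3, C4, C5, C6]
    linear_combination (x+y)*hm
  · subst hxy
    simp [boseF, A1, A2, A3, A4, A5, B1, B2, B3, C1, C2, C3, C4, C5, C6]
  · have hg : ¬(2 * y - x = x) := fun h => hxy (by linear_combination m*h - (y-x)*hm)
    simp [boseF, hxy, hg, A1, A2, A3, A4, A5, B1, B2, B3, C1, C2, C3, C4, C5, C6]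
    linear_combination y*hm
  · subst hxy
    simp [boseF, A1, A2, A3, A4, A5, B1, B2, B3, C1, C2, C3, C4, C5, C6]
  · have hg : ¬(2 * x - y = x) := fun h => hxy (by linear_combination -h)
    simp [boseF, hxy, hg, A1, A2, A3, A4, A5, B1, B2, B3, C1, C2, C3, C4, C5, C6]

/-- Half-function for the Skolem construction. -/
def hh (t : ℕ) (s : ZMod (2*t)) : ZMod (2*t) :=
  ((if s.val % 2 = 0 then s.val / 2 else t + s.val / 2 : ℕ) : ZMod (2*t))

/-- Inverse of `hh`. -/
def gg (t : ℕ) (w : ZMod (2*t)) : ZMod (2*t) :=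
  ((if w.val < t then 2 * w.val else 2 * w.val + 1 : ℕ) : ZMod (2*t))

section lemmas
variable {t : ℕ} (ht : 1 ≤ t)

lemma mod2t (a : ℕ) (ha : a < 4*t) : a % (2*t) = if a < 2*t then a else a - 2*t := by
  split
  · exact Nat.mod_eq_of_lt (by omega)
  · rw [Nat.mod_eq_sub_mod (by omega)]
    exact Nat.mod_eq_of_lt (by omega)

include ht

lemma hh_val (s : ZMod (2*t)) :
    (hh t s).val = if s.val % 2 = 0 then s.val / 2 else t + s.val / 2 := by
  haveI : NeZero (2*t) := ⟨by omega⟩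
  have hs : s.val < 2*t := ZMod.val_lt s
  rw [hh, ZMod.val_natCast]
  split <;> exact Nat.mod_eq_of_lt (by omega)

lemma gg_val (w : ZMod (2*t)) :
    (gg t w).val = if w.val < t then 2 * w.val else 2 * w.val + 1 - 2*t := by
  haveI : NeZero (2*t) := ⟨by omega⟩
  have hw : w.val < 2*t := ZMod.val_lt w
  rw [gg, ZMod.val_natCast]
  split
  · exact Nat.mod_eq_of_lt (by omega)
  · rw [mod2t _ (by omega)]
    split <;> omega

lemma hh_gg (w : ZMod (2*t)) : hh t (gg t w) = w := by
  haveI : NeZero (2*t) := ⟨by omega⟩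
  apply ZMod.val_injective
  rw [hh_val ht, gg_val ht]
  have hw : w.val < 2*t := ZMod.val_lt w
  split_ifs <;> omega

lemma gg_hh (s : ZMod (2*t)) : gg t (hh t s) = s := by
  haveI : NeZero (2*t) := ⟨by omega⟩
  apply ZMod.val_injective
  rw [gg_val ht, hh_val ht]
  have hs : s.val < 2*t := ZMod.val_lt s
  split_ifs <;> omega

lemma val_add_t (x : ZMod (2*t)) :
    (x + (t : ZMod (2*t))).val = if x.val < t then x.val + t else x.val - t := by
  haveI : NeZero (2*t) := ⟨by omega⟩
  have hx : x.val < 2*t := ZMod.val_lt x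
  rw [ZMod.val_add, ZMod.val_natCast, Nat.mod_eq_of_lt (show t < 2*t by omega)]
  rw [mod2t _ (by omega)]
  split_ifs <;> omega

lemma hh_dbl (x : ZMod (2*t)) :
    hh t (x + x) = if x.val < t then x else x + (t : ZMod (2*t)) := by
  haveI : NeZero (2*t) := ⟨by omega⟩
  apply ZMod.val_injective
  have hx : x.val < 2*t := ZMod.val_lt x
  rw [hh_val ht, ZMod.val_add, mod2t _ (by omega)]
  rw [apply_ite ZMod.val, val_add_t ht]
  split_ifs <;> omega

omit ht in
lemma t_add_t : ((t : ZMod (2*t)) + t) = 0 := by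
  have : ((2*t : ℕ) : ZMod (2*t)) = 0 := ZMod.natCast_self _
  push_cast at this
  linear_combination this

end lemmas

/-- Skolem-type quasigroup on `Option (ZMod (2t) × ZMod 3)`. -/
def skF (t : ℕ) :
    Option (ZMod (2*t) × ZMod 3) → Option (ZMod (2*t) × ZMod 3) → Option (ZMod (2*t) × ZMod 3)
  | none, none => none
  | none, some p => some (p.1 + (t : ZMod (2*t)), if p.1.val < t then p.2 + 2 else p.2 + 1)
  | some p, none => some (p.1 + (t : ZMod (2*t)), if p.1.val < t then p.2 + 2 else p.2 + 1)
  | some p, some q =>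
    if q.2 = p.2 then
      (if q.1 = p.1 then some p else some (hh t (p.1 + q.1), p.2 + 1))
    else if q.2 = p.2 + 1 then
      (if q.1 = hh t (p.1 + p.1) then (if p.1.val < t then some (p.1, p.2 + 2) else none)
       else some (gg t q.1 - p.1, p.2))
    else
      (if p.1 = hh t (q.1 + q.1) then (if q.1.val < t then some (q.1, p.2 + 1) else none)
       else some (gg t p.1 - q.1, q.2))

theorem sk_idem (t : ℕ) (p : Option (ZMod (2*t) × ZMod 3)) : skF t p p = p := by
  cases p with
  | none => rfl
  | some p => simp [skF]

theorem sk_comm (t : ℕ) (p q : Option (ZMod (2*t) × ZMod 3)) : skF t p q = skF t q p := by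
  have htri : ∀ i j : ZMod 3, j = i ∨ j = i + 1 ∨ j = i + 2 := by decide
  have A1 : ∀ i : ZMod 3, ¬(i + 1 = i) := by decide
  have A2 : ∀ i : ZMod 3, ¬(i + 2 = i) := by decide
  have A3 : ∀ i : ZMod 3, ¬(i = i + 1) := by decide
  have A4 : ∀ i : ZMod 3, ¬(i = i + 1 + 1) := by decide
  have A5 : ∀ i : ZMod 3, ¬(i + 2 = i + 1) := by decide
  have B1 : ∀ i : ZMod 3, i + 1 + 1 = i + 2 := by decide
  have B2 : ∀ i : ZMod 3, i + 2 + 1 = i := by decide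
  have B3 : ∀ i : ZMod 3, i + 2 + 2 = i + 1 := by decide
  have C1 : (2 : ZMod 3) ≠ 0 := by decide
  have C2 : (2 : ZMod 3) ≠ 1 := by decide
  have C3 : (1 : ZMod 3) ≠ 0 := by decide
  have C4 : (1 : ZMod 3) ≠ 2 := by decide
  have C5 : (0 : ZMod 3) ≠ 1 := by decide
  have C6 : (0 : ZMod 3) ≠ 2 := by decide
  cases p with
  | none => cases q with
    | none => rfl
    | some q => rfl
  | some p => cases q with
    | none => rfl
    | some q =>
      obtain ⟨x, k⟩ := p
      obtain ⟨y, j⟩ := q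
      rcases htri k j with rfl | rfl | rfl
      · by_cases hxy : y = x
        · subst hxy; simp [skF]
        · simp [skF, hxy, Ne.symm hxy, add_comm x y]
      · by_cases hg : y = hh t (x + x)
        · by_cases hx : x.val < t <;>
            simp [skF, hg, hx, A1, A3, A4, B1, C1, C2, C3, C4, C5, C6]
        · simp [skF, hg, A1, A3, A4, B1, C1, C2, C3, C4, C5, C6]
      · by_cases hg : x = hh t (y + y)
        · by_cases hy : y.val < t <;>
            simp [skF, hg, hy, A2, A5, B2, B3, C1, C2, C3, C4, C5, C6]
        · simp [skF, hg, A2, A5, B2, B3, C1, C2, C3, C4, C5, C6]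

theorem sk_inv (t : ℕ) (ht : 1 ≤ t) (p q : Option (ZMod (2*t) × ZMod 3)) :
    skF t p (skF t p q) = q := by
  haveI : NeZero (2*t) := ⟨by omega⟩
  have A1 : ∀ i : ZMod 3, ¬(i + 1 = i) := by decide
  have A2 : ∀ i : ZMod 3, ¬(i + 2 = i) := by decide
  have A3 : ∀ i : ZMod 3, ¬(i = i + 1) := by decide
  have A5 : ∀ i : ZMod 3, ¬(i + 2 = i + 1) := by decide
  have B1 : ∀ i : ZMod 3, i + 1 + 1 = i + 2 := by decide
  have B2 : ∀ i : ZMod 3, i + 2 + 1 = i := by decide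
  have B3 : ∀ i : ZMod 3, i + 2 + 2 = i + 1 := by decide
  have B4 : ∀ i : ZMod 3, i + 1 + 2 = i := by decide
  have C1 : (2 : ZMod 3) ≠ 0 := by decide
  have C2 : (2 : ZMod 3) ≠ 1 := by decide
  have C3 : (1 : ZMod 3) ≠ 0 := by decide
  have C4 : (1 : ZMod 3) ≠ 2 := by decide
  have C5 : (0 : ZMod 3) ≠ 1 := by decide
  have C6 : (0 : ZMod 3) ≠ 2 := by decide
  have hinj : ∀ a b : ZMod (2*t), hh t a = hh t b → a = b := by
    intro a b h
    rw [← gg_hh ht a, h, gg_hh ht]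
  have att : ∀ x : ZMod (2*t), x + (t : ZMod (2*t)) + t = x := by
    intro x; rw [add_assoc, t_add_t, add_zero]
  have dblt : ∀ x : ZMod (2*t),
      (x + (t : ZMod (2*t))) + (x + (t : ZMod (2*t))) = x + x := by
    intro x
    rw [show (x + (t:ZMod (2*t))) + (x + (t:ZMod (2*t)))
        = (x + x) + ((t:ZMod (2*t)) + t) by ring, t_add_t, add_zero]
  have vlt : ∀ x : ZMod (2*t), x.val < 2*t := fun x => ZMod.val_lt x
  have vlo : ∀ x : ZMod (2*t), x.val < t → ¬((x + (t : ZMod (2*t))).val < t) := by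
    intro x hx
    rw [val_add_t ht]; simp [hx]
  have vhi : ∀ x : ZMod (2*t), ¬(x.val < t) → (x + (t : ZMod (2*t))).val < t := by
    intro x hx
    rw [val_add_t ht]
    simp only [hx, if_false]
    have := vlt x
    omega
  cases p with
  | none =>
    cases q with
    | none => rfl
    | some q =>
      obtain ⟨x, k⟩ := q
      by_cases hx : x.val < t
      · have h1 : skF t none (some (x, k)) = some (x + (t:ZMod (2*t)), k + 2) := by
          simp [skF, hx]
        rw [h1]
        simp [skF, vlo x hx, att, B2]
      · have h1 : skF t none (some (x, k)) = some (x + (t:ZMod (2*t)), k + 1) := by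
          simp [skF, hx]
        rw [h1]
        simp [skF, vhi x hx, att, B4]
  | some p =>
    obtain ⟨x, k⟩ := p
    cases q with
    | none =>
      by_cases hx : x.val < t
      · have h1 : skF t (some (x, k)) none = some (x + (t:ZMod (2*t)), k + 2) := by
          simp [skF, hx]
        rw [h1]
        have hg : x = hh t ((x + (t:ZMod (2*t))) + (x + (t:ZMod (2*t)))) := by
          rw [dblt x, hh_dbl ht]; simp [hx]
        simp [skF, A2, A5, ← hg, vlo x hx, C1, C2, C3, C4, C5, C6]
      · have h1 : skF t (some (x, k)) none = some (x + (t:ZMod (2*t)), k + 1) := by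
          simp [skF, hx]
        rw [h1]
        have hg : x + (t:ZMod (2*t)) = hh t (x + x) := by
          rw [hh_dbl ht]; simp [hx]
        simp [skF, A1, ← hg, hx, C1, C2, C3, C4, C5, C6]
    | some q =>
      obtain ⟨y, j⟩ := q
      have htri : ∀ i j : ZMod 3, j = i ∨ j = i + 1 ∨ j = i + 2 := by decide
      rcases htri k j with rfl | rfl | rfl
      · -- same level
        by_cases hxy : y = x
        · subst hxy; simp [skF]
        · have h1 : skF t (some (x, j)) (some (y, j)) = some (hh t (x + y), j + 1) := by
            simp [skF, hxy]
          rw [h1]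
          have hgg : ¬(hh t (x + y) = hh t (x + x)) := by
            intro h
            exact hxy (by have := hinj _ _ h; exact add_left_cancel this)
          simp [skF, A1, hgg, gg_hh ht, C1, C2, C3, C4, C5, C6]
      · -- j = k + 1
        by_cases hg : y = hh t (x + x)
        · by_cases hx : x.val < t
          · have h1 : skF t (some (x, k)) (some (y, k+1)) = some (x, k + 2) := by
              simp [skF, hg, hx, A1]
            rw [h1]
            have hg2 : x = hh t (x + x) := by rw [hh_dbl ht]; simp [hx]
            simp [skF, A2, A5, ← hg2, hx, C1, C2, C3, C4, C5, C6]
            rw [hg, ← hg2]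
          · have h1 : skF t (some (x, k)) (some (y, k+1)) = none := by
              simp [skF, hg, hx, A1]
            rw [h1]
            have hg2 : x + (t:ZMod (2*t)) = hh t (x + x) := by
              rw [hh_dbl ht]; simp [hx]
            simp [skF, hx]
            rw [hg, ← hg2]
        · have h1 : skF t (some (x, k)) (some (y, k+1)) = some (gg t y - x, k) := by
            simp [skF, hg, A1]
          rw [h1]
          have hne : ¬(gg t y - x = x) := by
            intro h
            apply hg
            have h3 : gg t y = x + x := by linear_combination h
            rw [← hh_gg ht y, h3]
          simp [skF, hne, C1, C2, C3, C4, C5, C6]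
          exact hh_gg ht y
      · -- j = k + 2
        by_cases hg : x = hh t (y + y)
        · by_cases hy : y.val < t
          · have hxy : x = y := by rw [hg, hh_dbl ht]; simp [hy]
            subst hxy
            have h1 : skF t (some (x, k)) (some (x, k+2)) = some (x, k + 1) := by
              simp [skF, hy, ← hg, A2, A5, C1, C2, C3, C4, C5, C6]
            rw [h1]
            simp [skF, A1, ← hg, hy, C1, C2, C3, C4, C5, C6]
          · have h1 : skF t (some (x, k)) (some (y, k+2)) = none := by
              simp [skF, hy, ← hg, A2, A5, C1, C2, C3, C4, C5, C6]
            rw [h1]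
            have hg2 : x = y + (t:ZMod (2*t)) := by rw [hg, hh_dbl ht]; simp [hy]
            have hx : x.val < t := by rw [hg2]; exact vhi y hy
            simp [skF, hx, hg2, att]
            exact fun h2 => absurd (vhi y hy) (by omega)
        · have h1 : skF t (some (x, k)) (some (y, k+2)) = some (gg t x - y, k + 2) := by
            simp [skF, hg, A2, A5, C1, C2, C3, C4, C5, C6]
          rw [h1]
          have hne : ¬(x = hh t ((gg t x - y) + (gg t x - y))) := by
            intro h
            apply hg
            have h2 := congrArg (gg t) h
            rw [gg_hh ht] at h2
            have h3 : gg t x = y + y := by linear_combination -h2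
            rw [← hh_gg ht x, h3]
          simp [skF, A2, A5, hne, C1, C2, C3, C4, C5, C6]

theorem quasi_map {α β : Type} (e : α ≃ β) (f : α → α → α)
    (hc : ∀ x y, f x y = f y x) (hi : ∀ x, f x x = x) (hv : ∀ x y, f x (f x y) = y) :
    ∃ g : β → β → β, (∀ x y, g x y = g y x) ∧ (∀ x, g x x = x) ∧
      (∀ x y, g x (g x y) = y) :=
  ⟨fun a b => e (f (e.symm a) (e.symm b)),
   fun a b => by simp [hc (e.symm a) (e.symm b)],
   fun a => by simp [hi],
   fun a b => by simp [hv]⟩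

/-- Existence of Steiner triple systems: for `v ≥ 1`, a `(v,3,2)`-configuration
(equivalently, a factorization of the complete graph `K_v` into edge-disjoint
3-cycles) exists if and only if `v ≡ 1` or `3 (mod 6)`. -/
theorem steiner_triple_systems (v : ℕ) (hv : 1 ≤ v) :
    (∃ B : Finset (Finset (Fin v)), IsConfiguration v 3 2 B) ↔
      (v % 6 = 1 ∨ v % 6 = 3) := by
  constructor
  · rintro ⟨B, hB1, hB2⟩
    exact sts_necessary v hv B hB1 hB2
  · intro h
    suffices hq : ∃ f : Fin v → Fin v → Fin v, (∀ x y, f x y = f y x) ∧ (∀ x, f x x = x) ∧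
        (∀ x y, f x (f x y) = y) by
      obtain ⟨f, h1, h2, h3⟩ := hq
      obtain ⟨B, hB⟩ := sts_of_quasigroup f h1 h2 h3
      exact ⟨B, hB⟩
    rcases h with h1 | h3
    · by_cases hv1 : v = 1
      · subst hv1
        exact ⟨fun a _ => a, fun x y => Subsingleton.elim _ _, fun x => rfl,
          fun x y => Subsingleton.elim _ _⟩
      · obtain ⟨t, ht, rfl⟩ : ∃ t, 1 ≤ t ∧ v = 6 * t + 1 := ⟨v / 6, by omega, by omega⟩
        haveI : NeZero (2 * t) := ⟨by omega⟩
        have e : Option (ZMod (2 * t) × ZMod 3) ≃ Fin (6 * t + 1) :=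
          Fintype.equivOfCardEq (by
            rw [Fintype.card_option, Fintype.card_prod, ZMod.card, ZMod.card, Fintype.card_fin]; ring)
        exact quasi_map e (skF t) (sk_comm t) (sk_idem t) (sk_inv t ht)
    · obtain ⟨n, hn2, rfl⟩ : ∃ n, n % 2 = 1 ∧ v = 3 * n := ⟨v / 3, by omega, by omega⟩
      haveI : NeZero n := ⟨by omega⟩
      set m : ZMod n := (((n + 1) / 2 : ℕ) : ZMod n) with hmdef
      have hm : 2 * m = 1 := by
        have h2 : ((2 * ((n + 1) / 2) : ℕ) : ZMod n) = ((n + 1 : ℕ) : ZMod n) := by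
          rw [show 2 * ((n + 1) / 2) = n + 1 from by omega]
        push_cast at h2
        rw [ZMod.natCast_self] at h2
        rw [hmdef]
        push_cast
        rw [h2]
        ring
      have e : (ZMod n × ZMod 3) ≃ Fin (3 * n) :=
        Fintype.equivOfCardEq (by
          rw [Fintype.card_prod, ZMod.card, ZMod.card, Fintype.card_fin]; ring)
      exact quasi_map e (boseF n m) (bose_comm n m) (bose_idem n m) (bose_inv n m hm)
end

section
/- (Exponential correspondence for cube factorizations.) Let 1 ≤ ℓ < n. Suppose there exists a family B of subsets of Fin n, each of cardinality ℓ+1, such that every subset of Fin n of cardinality ℓ is contained in exactly one member of B. Then there exists a family C of (ℓ+1)-faces of the n-cube Q_n (functions Fin n → Option Bool with exactly ℓ+1 coordinates equal to none) such that every ℓ-face of Q_n (a function Fin n → Option Bool with exactly ℓ coordinates equal to none) is contained in exactly one member of C; that is, the ℓ-skeleton of Q_n is factored by boundaries of (ℓ+1)-cubes. -/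
/-- A `d`-face of the `n`-cube: a function `Fin n → Option Bool` with exactly `d`
coordinates equal to `none` (the free coordinates). -/
def IsCubeFace (n d : ℕ) (f : Fin n → Option Bool) : Prop :=
  (Finset.univ.filter fun i => f i = none).card = d

/-- A face `f` is contained in a face `g` iff every coordinate fixed by `g` is
fixed to the same value by `f`. -/
def FaceContained {n : ℕ} (f g : Fin n → Option Bool) : Prop :=
  ∀ (i : Fin n) (b : Bool), g i = some b → f i = some b

/-- Exponential correspondence: if the `(ℓ-1)`-skeleton of the simplex on `Fin n`
factors via an `(n, ℓ+1, ℓ)`-configuration, then the `ℓ`-skeleton of the `n`-cube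
`Q_n` is factored by boundaries of `(ℓ+1)`-cubes. -/
theorem cube_skeleton_factorization_of_config (ℓ n : ℕ) (hℓ : 1 ≤ ℓ) (hn : ℓ < n)
    (B : Finset (Finset (Fin n)))
    (hBcard : ∀ b ∈ B, b.card = ℓ + 1)
    (hBcover : ∀ t : Finset (Fin n), t.card = ℓ → ∃! b, b ∈ B ∧ t ⊆ b) :
    ∃ C : Finset (Fin n → Option Bool),
      (∀ g ∈ C, IsCubeFace n (ℓ + 1) g) ∧
      ∀ f : Fin n → Option Bool, IsCubeFace n ℓ f → ∃! g, g ∈ C ∧ FaceContained f g := by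
  classical
  refine ⟨Finset.univ.filter fun g => (Finset.univ.filter fun i => g i = none) ∈ B, ?_, ?_⟩
  · intro g hg
    simp only [Finset.mem_filter, Finset.mem_univ, true_and] at hg
    exact hBcard _ hg
  · intro f hf
    set S := Finset.univ.filter fun i => f i = none with hS
    obtain ⟨b, ⟨hbB, hSb⟩, huniq⟩ := hBcover S hf
    set g : Fin n → Option Bool := fun i => if i ∈ b then none else f i with hg
    have hfree : (Finset.univ.filter fun i => g i = none) = b := by
      ext i
      simp only [Finset.mem_filter, Finset.mem_univ, true_and, hg]
      constructor
      · intro h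
        by_contra hib
        rw [if_neg hib] at h
        exact hib (hSb (by simp [hS, h]))
      · intro h; rw [if_pos h]
    refine ⟨g, ⟨?_, ?_⟩, ?_⟩
    · simp only [Finset.mem_filter, Finset.mem_univ, true_and, hfree]; exact hbB
    · intro i v hv
      simp only [hg] at hv
      by_cases hib : i ∈ b
      · rw [if_pos hib] at hv; exact absurd hv (by simp)
      · rwa [if_neg hib] at hv
    · rintro g' ⟨hg'C, hg'cont⟩
      simp only [Finset.mem_filter, Finset.mem_univ, true_and] at hg'C
      have hSsub : S ⊆ (Finset.univ.filter fun i => g' i = none) := by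
        intro i hi
        simp only [hS, Finset.mem_filter, Finset.mem_univ, true_and] at hi ⊢
        cases h : g' i with
        | none => rfl
        | some v => exact absurd (hg'cont i v h) (by simp [hi])
      have hbeq : (Finset.univ.filter fun i => g' i = none) = b :=
        huniq _ ⟨hg'C, hSsub⟩
      funext i
      by_cases hib : i ∈ b
      · have : g' i = none := by
          have := hbeq ▸ hib
          simpa using this
        simp [this, hg, hib]
      · have hne : g' i ≠ none := by
          intro h
          exact hib (hbeq ▸ (by simp [h] : i ∈ Finset.univ.filter fun i => g' i = none))
        cases h : g' i with
        | none => exact absurd h hne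
        | some v =>
          simp [hg, hib, hg'cont i v h]
end

section
/- For every integer n ≥ 3, there exists a family C of 3-faces of the n-cube Q_n such that every 2-face of Q_n is contained in exactly one member of C (i.e., the 2-skeleton of Q_n is factored by boundaries of 3-cubes) if and only if n ≡ 1 (mod 6) or n ≡ 3 (mod 6) — that is, exactly when a Steiner triple system on n points exists. -/
/-!
A face of `Q_n` is a set of free coordinates together with values on the remaining ones, and one
face lies in another iff its free set is contained in the other's and their values agree off the
larger free set. Hence a family of `k`-faces factoring the `t`-skeleton amounts to a Steiner
system `S(t, k, n)`: the blocks are the free sets of the members through the all-`false` vertex,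
and conversely each block contributes all `k`-faces with that free set. For `t = 2`, `k = 3` these
are the Steiner triple systems.

Counting pairs, overall and through a point, gives `3 ∣ n(n-1)/2` and `2 ∣ n - 1`, i.e.
`n ≡ 1, 3 (mod 6)`. Conversely, the triples `{x, y, xy}` of a Steiner quasigroup (idempotent,
commutative, `x(xy) = y`) form a Steiner triple system, and such quasigroups are built on
`ℤ/(2k+1) × ℤ/3` by Bose's construction from the idempotent quasigroup `x ∘ y = (x + y)/2`, and on
`{∞} ∪ ℤ/2k × ℤ/3` by Skolem's construction from a half-idempotent one.
-/

open Finset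

def IsSteinerSystem {α : Type*} (t k : ℕ) (S : Finset (Finset α)) : Prop :=
  (∀ B ∈ S, #B = k) ∧ ∀ A : Finset α, #A = t → ∃! B, B ∈ S ∧ A ⊆ B

namespace IsSteinerSystem
variable {α : Type*} [Fintype α] [DecidableEq α] {S : Finset (Finset α)}

theorem card_mul_choose {t k : ℕ} (h : IsSteinerSystem t k S) :
    #S * k.choose t = (Fintype.card α).choose t := by
  have hcover : S.biUnion (powersetCard t) = univ.powersetCard t := by
    ext A
    simp only [mem_biUnion, mem_powersetCard, subset_univ, true_and]
    refine ⟨fun ⟨B, _, _, hA⟩ => hA, fun hA => ?_⟩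
    obtain ⟨B, ⟨hB, hAB⟩, -⟩ := h.2 A hA
    exact ⟨B, hB, hAB, hA⟩
  have hdisj : (S : Set (Finset α)).PairwiseDisjoint (powersetCard t) :=
    fun B₁ hB₁ B₂ hB₂ hne => disjoint_left.mpr fun A hA₁ hA₂ => by
      rw [mem_powersetCard] at hA₁ hA₂
      exact hne ((h.2 A hA₁.2).unique ⟨hB₁, hA₁.1⟩ ⟨hB₂, hA₂.1⟩)
  rw [← card_univ, ← card_powersetCard, ← hcover, card_biUnion hdisj,
    sum_congr rfl fun B hB => by rw [card_powersetCard, h.1 B hB], sum_const, smul_eq_mul]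

/-- The blocks through `x`, with `x` removed, partition the other points. -/
theorem card_filter_mem_mul {k : ℕ} (h : IsSteinerSystem 2 k S) (x : α) :
    #(S.filter (x ∈ ·)) * (k - 1) = Fintype.card α - 1 := by
  have hpair : ∀ y, y ≠ x → ∃! B, B ∈ S ∧ x ∈ B ∧ y ∈ B := fun y hy => by
    simpa [insert_subset_iff] using h.2 {x, y} (card_pair hy.symm)
  have hcover : (S.filter (x ∈ ·)).biUnion (·.erase x) = univ.erase x := by
    ext y
    simp only [mem_biUnion, mem_filter, mem_erase, mem_univ, and_true]
    refine ⟨fun ⟨B, _, hy, _⟩ => hy, fun hy => ?_⟩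
    obtain ⟨B, ⟨hB, hxB, hyB⟩, -⟩ := hpair y hy
    exact ⟨B, ⟨hB, hxB⟩, hy, hyB⟩
  have hdisj : ((S.filter (x ∈ ·)) : Set (Finset α)).PairwiseDisjoint (·.erase x) :=
    fun B₁ hB₁ B₂ hB₂ hne => disjoint_left.mpr fun y hy₁ hy₂ => by
      simp only [coe_filter, Set.mem_ofPred_eq] at hB₁ hB₂
      rw [mem_erase] at hy₁ hy₂
      exact hne ((hpair y hy₁.1).unique ⟨hB₁.1, hB₁.2, hy₁.2⟩ ⟨hB₂.1, hB₂.2, hy₂.2⟩)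
  rw [← card_univ, ← card_erase_of_mem (mem_univ x), ← hcover, card_biUnion hdisj,
    sum_congr rfl fun B hB => by
      rw [card_erase_of_mem (mem_filter.mp hB).2, h.1 B (mem_filter.mp hB).1],
    sum_const, smul_eq_mul]

theorem card_mod_six [Nonempty α] (h : IsSteinerSystem 2 3 S) :
    Fintype.card α % 6 = 1 ∨ Fintype.card α % 6 = 3 := by
  obtain ⟨x⟩ := ‹Nonempty α›
  obtain ⟨m, hm⟩ := Nat.exists_eq_add_one.mpr (Fintype.card_pos (α := α))
  have hr : #(S.filter (x ∈ ·)) * 2 = m := by simpa [hm] using h.card_filter_mem_mul x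
  have hb : #S * 3 = (m + 1).choose 2 := by simpa [hm] using h.card_mul_choose
  have hpairs : (m + 1) * m = (m + 1).choose 2 * 2 := by
    simpa using Nat.add_one_mul_choose_eq m 1
  have : 3 ∣ #(S.filter (x ∈ ·)) * (2 * #(S.filter (x ∈ ·)) + 1) :=
    ⟨#S, by subst hr; linarith⟩
  rcases Nat.prime_three.dvd_mul.mp this with h3 | h3 <;> omega

end IsSteinerSystem

def IsSkeletonFactorization (n t k : ℕ) (C : Finset (Fin n → Option Bool)) : Prop :=
  (∀ g ∈ C, IsCubeFace n k g) ∧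
    ∀ f : Fin n → Option Bool, IsCubeFace n t f → ∃! g, g ∈ C ∧ FaceContained f g

section CubeFace
variable {n : ℕ}

def cubeFace (B : Finset (Fin n)) (w : Fin n → Bool) : Fin n → Option Bool :=
  fun i => if i ∈ B then none else some (w i)

lemma isCubeFace_cubeFace_iff {d : ℕ} {B : Finset (Fin n)} {w : Fin n → Bool} :
    IsCubeFace n d (cubeFace B w) ↔ #B = d := by
  unfold IsCubeFace
  congr! 2
  ext i
  by_cases hi : i ∈ B <;> simp [cubeFace, hi]

lemma exists_eq_cubeFace (f : Fin n → Option Bool) : ∃ B w, f = cubeFace B w :=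
  ⟨univ.filter (f · = none), fun i => (f i).getD false, funext fun i => by
    cases h : f i <;> simp [cubeFace, h]⟩

lemma faceContained_cubeFace_iff {A B : Finset (Fin n)} {v w : Fin n → Bool} :
    FaceContained (cubeFace A v) (cubeFace B w) ↔ A ⊆ B ∧ ∀ i ∉ B, v i = w i := by
  simp only [FaceContained, cubeFace]
  refine ⟨fun h => ⟨fun i hiA => ?_, fun i hiB => ?_⟩, fun ⟨hAB, hvw⟩ i b => ?_⟩
  · by_contra hiB
    simpa [hiA] using h i (w i) (by simp [hiB])
  · have := h i (w i) (by simp [hiB])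
    split_ifs at this
    simpa using this
  · by_cases hiB : i ∈ B
    · simp [hiB]
    · have hiA : i ∉ A := fun h => hiB (hAB h)
      simp [hiA, hiB, hvw i hiB]

lemma cubeFace_eq_cubeFace_iff {A B : Finset (Fin n)} {v w : Fin n → Bool} :
    cubeFace A v = cubeFace B w ↔ A = B ∧ ∀ i ∉ B, v i = w i := by
  refine ⟨fun h => ?_, fun ⟨hAB, hvw⟩ => funext fun i => ?_⟩
  · have hAB : FaceContained (cubeFace A v) (cubeFace B w) := fun i b hb => by rwa [h]
    have hBA : FaceContained (cubeFace B w) (cubeFace A v) := fun i b hb => by rwa [← h]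
    obtain ⟨hAB, hvw⟩ := faceContained_cubeFace_iff.mp hAB
    exact ⟨hAB.antisymm (faceContained_cubeFace_iff.mp hBA).1, hvw⟩
  · subst hAB
    simp only [cubeFace]
    split_ifs with hi
    · rfl
    · rw [hvw i hi]

theorem IsSkeletonFactorization.exists_isSteinerSystem {t k : ℕ}
    {C : Finset (Fin n → Option Bool)} (hC : IsSkeletonFactorization n t k C) :
    ∃ S : Finset (Finset (Fin n)), IsSteinerSystem t k S := by
  obtain ⟨hCk, hC⟩ := hC
  refine ⟨univ.filter fun B => cubeFace B (fun _ => false) ∈ C, fun B hB => ?_, fun A hA => ?_⟩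
  · exact isCubeFace_cubeFace_iff.mp (hCk _ (mem_filter.mp hB).2)
  obtain ⟨g, ⟨hgC, hAg⟩, hg⟩ := hC (cubeFace A fun _ => false) (isCubeFace_cubeFace_iff.mpr hA)
  obtain ⟨B, w, rfl⟩ := exists_eq_cubeFace g
  obtain ⟨hAB, hw⟩ := faceContained_cubeFace_iff.mp hAg
  have hw0 : cubeFace B w = cubeFace B fun _ => false :=
    cubeFace_eq_cubeFace_iff.mpr ⟨rfl, fun i hi => (hw i hi).symm⟩
  rw [hw0] at hgC hg
  refine ⟨B, ⟨by simpa using hgC, hAB⟩, fun B' ⟨hB', hAB'⟩ => ?_⟩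
  have := hg _ ⟨(mem_filter.mp hB').2, faceContained_cubeFace_iff.mpr ⟨hAB', fun _ _ => rfl⟩⟩
  exact (cubeFace_eq_cubeFace_iff.mp this).1

theorem IsSteinerSystem.isSkeletonFactorization {t k : ℕ} {S : Finset (Finset (Fin n))}
    (hS : IsSteinerSystem t k S) :
    IsSkeletonFactorization n t k ((S ×ˢ univ).image fun p => cubeFace p.1 p.2) := by
  refine ⟨?_, fun f hf => ?_⟩
  · simp only [mem_image, mem_product, forall_exists_index, and_imp]
    rintro _ ⟨B, w⟩ hB - rfl
    exact isCubeFace_cubeFace_iff.mpr (hS.1 B hB)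
  obtain ⟨A, v, rfl⟩ := exists_eq_cubeFace f
  obtain ⟨B, ⟨hB, hAB⟩, huniq⟩ := hS.2 A (isCubeFace_cubeFace_iff.mp hf)
  refine ⟨cubeFace B v, ⟨mem_image.mpr ⟨(B, v), by simpa using hB, rfl⟩,
    faceContained_cubeFace_iff.mpr ⟨hAB, fun _ _ => rfl⟩⟩, ?_⟩
  simp only [mem_image, mem_product, and_imp, forall_exists_index]
  rintro _ ⟨B', w'⟩ hB' - rfl hAg
  obtain ⟨hAB', hw⟩ := faceContained_cubeFace_iff.mp hAg
  obtain rfl := huniq B' ⟨hB', hAB'⟩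
  exact cubeFace_eq_cubeFace_iff.mpr ⟨rfl, fun i hi => (hw i hi).symm⟩

theorem exists_isSkeletonFactorization_iff {t k : ℕ} :
    (∃ C, IsSkeletonFactorization n t k C) ↔
      ∃ S : Finset (Finset (Fin n)), IsSteinerSystem t k S :=
  ⟨fun ⟨_, hC⟩ => hC.exists_isSteinerSystem, fun ⟨_, hS⟩ => ⟨_, hS.isSkeletonFactorization⟩⟩

end CubeFace

structure IsSteinerQuasigroup {α : Type*} (mul : α → α → α) : Prop where
  mul_self : ∀ x, mul x x = x
  comm : ∀ x y, mul x y = mul y x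
  mul_mul_cancel_left : ∀ x y, mul x (mul x y) = y

namespace IsSteinerQuasigroup
variable {α : Type*} {mul : α → α → α}

lemma mul_mul_cancel_right (h : IsSteinerQuasigroup mul) (x y : α) : mul (mul x y) y = x := by
  rw [h.comm, h.comm x, h.mul_mul_cancel_left]

lemma mul_mul_cancel_left' (h : IsSteinerQuasigroup mul) (x y : α) : mul y (mul x y) = x := by
  rw [h.comm x, h.mul_mul_cancel_left]

lemma mul_ne_left (h : IsSteinerQuasigroup mul) {x y : α} (hxy : x ≠ y) : mul x y ≠ x :=
  fun hx => hxy (by rw [← h.mul_mul_cancel_left x y, hx, h.mul_self])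

lemma equivConj {β : Type*} (h : IsSteinerQuasigroup mul) (e : α ≃ β) :
    IsSteinerQuasigroup fun x y => e (mul (e.symm x) (e.symm y)) where
  mul_self x := by simp [h.mul_self]
  comm x y := by rw [h.comm]
  mul_mul_cancel_left x y := by simp [h.mul_mul_cancel_left]

variable [DecidableEq α]

lemma card_triple (h : IsSteinerQuasigroup mul) {x y : α} (hxy : x ≠ y) : #{x, y, mul x y} = 3 :=
  card_eq_three.mpr ⟨x, y, mul x y, hxy, (h.mul_ne_left hxy).symm,
    by rw [h.comm]; exact (h.mul_ne_left hxy.symm).symm, rfl⟩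

lemma mul_mem_triple (h : IsSteinerQuasigroup mul) {x y u v : α}
    (hu : u ∈ ({x, y, mul x y} : Finset α)) (hv : v ∈ ({x, y, mul x y} : Finset α)) :
    mul u v ∈ ({x, y, mul x y} : Finset α) := by
  simp only [mem_insert, mem_singleton] at hu hv ⊢
  rcases hu with rfl | rfl | rfl <;> rcases hv with rfl | rfl | rfl <;>
    simp [h.mul_self, h.mul_mul_cancel_right, h.mul_mul_cancel_left', h.comm _ _]

def triples [Fintype α] (mul : α → α → α) : Finset (Finset α) :=
  univ.offDiag.image fun p => {p.1, p.2, mul p.1 p.2}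

theorem isSteinerSystem_triples [Fintype α] (h : IsSteinerQuasigroup mul) :
    IsSteinerSystem 2 3 (triples mul) := by
  simp only [IsSteinerSystem, triples, mem_image, mem_offDiag, mem_univ, true_and,
    Prod.exists, forall_exists_index, and_imp]
  refine ⟨fun _ x y hxy hB => hB ▸ h.card_triple hxy, fun A hA => ?_⟩
  obtain ⟨a, b, hab, rfl⟩ := card_eq_two.mp hA
  refine ⟨{a, b, mul a b}, ⟨⟨a, b, hab, rfl⟩, by simp [subset_iff]⟩, ?_⟩
  rintro _ ⟨⟨x, y, hxy, rfl⟩, hsub⟩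
  simp only [insert_subset_iff, singleton_subset_iff] at hsub
  -- a triple is closed under `mul`, so it contains `{a, b, mul a b}`, which has the same size
  refine (eq_of_subset_of_card_le ?_ ?_).symm
  · simp only [insert_subset_iff, singleton_subset_iff]
    exact ⟨hsub.1, hsub.2, h.mul_mem_triple hsub.1 hsub.2⟩
  · rw [h.card_triple hxy, h.card_triple hab]

end IsSteinerQuasigroup

lemma ZMod.eq_or_eq_add_one_or_eq_add_one (i j : ZMod 3) : j = i ∨ j = i + 1 ∨ i = j + 1 := by
  revert i j; decide

section Bose
variable {G : Type*} [AddCommGroup G] [DecidableEq G]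

/-- The Steiner quasigroup of Bose's triples `{(x, 0), (x, 1), (x, 2)}` and
`{(x, i), (y, i), (x ∘ y, i + 1)}` for `x ≠ y`, where `x ∘ y = σ (x + y)`. -/
def boseMul (σ : G ≃ G) (p q : G × ZMod 3) : G × ZMod 3 :=
  if p.1 = q.1 then (p.1, -(p.2 + q.2))
  else if p.2 = q.2 then (σ (p.1 + q.1), p.2 + 1)
  else if q.2 = p.2 + 1 then (σ.symm q.1 - p.1, p.2)
  else (σ.symm p.1 - q.1, q.2)

variable (σ : G ≃ G)

lemma boseMul_comm (p q : G × ZMod 3) : boseMul σ p q = boseMul σ q p := by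
  obtain ⟨x, i⟩ := p
  obtain ⟨y, j⟩ := q
  have hne : ∀ i : ZMod 3, i + 1 ≠ i := by decide
  have hne' : ∀ i : ZMod 3, i ≠ i + 1 + 1 := by decide
  by_cases hxy : x = y
  · subst hxy; simp [boseMul, add_comm]
  rcases ZMod.eq_or_eq_add_one_or_eq_add_one i j with rfl | rfl | rfl <;>
    simp [boseMul, hxy, Ne.symm hxy, add_comm y x, hne, hne']

lemma boseMul_boseMul_cancel_left (hσ : ∀ x, σ (x + x) = x) (p q : G × ZMod 3) :
    boseMul σ p (boseMul σ p q) = q := by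
  obtain ⟨x, i⟩ := p
  obtain ⟨y, j⟩ := q
  have hσ' : ∀ x, σ.symm x = x + x := fun x => by rw [Equiv.symm_apply_eq, hσ]
  have hne : ∀ i : ZMod 3, i + 1 ≠ i := by decide
  have hne' : ∀ i : ZMod 3, i ≠ i + 1 + 1 := by decide
  by_cases hxy : x = y
  · subst hxy; simp [boseMul]
  rcases ZMod.eq_or_eq_add_one_or_eq_add_one i j with rfl | rfl | rfl
  · have : x ≠ σ (x + y) := fun h => hxy <| by
      rw [← Equiv.symm_apply_eq, hσ'] at h
      exact add_left_cancel h
    simp [boseMul, hxy, this]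
  · have : x ≠ σ.symm y - x := fun h => hxy <| by
      rw [eq_sub_iff_add_eq, eq_comm, Equiv.symm_apply_eq, hσ] at h
      exact h.symm
    simp [boseMul, hxy, this]
  · have : x ≠ σ.symm x - y := fun h => hxy <| by
      rw [eq_sub_iff_add_eq, hσ'] at h
      exact (add_left_cancel h).symm
    simp [boseMul, hxy, this, hne, hne']

theorem isSteinerQuasigroup_boseMul (hσ : ∀ x, σ (x + x) = x) :
    IsSteinerQuasigroup (boseMul σ) where
  mul_self p := by
    have : ∀ i : ZMod 3, -(i + i) = i := by decide
    simp [boseMul, this]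
  comm := boseMul_comm σ
  mul_mul_cancel_left := boseMul_boseMul_cancel_left σ hσ

end Bose

section Skolem
variable {G : Type*} [AddCommGroup G] [DecidableEq G]

/-- The Steiner quasigroup of Skolem's triples on `{∞} ∪ G × ℤ/3`, where `x ∘ y = σ (x + y)` is
half-idempotent (`x ∘ x` is `x` on `L` and `x + c` off `L`): `{(x, 0), (x, 1), (x, 2)}` for `x ∈ L`,
`{∞, (x, i), (x + c, i + 1)}` for `x ∉ L`, and `{(x, i), (y, i), (x ∘ y, i + 1)}` for `x ≠ y`. -/
def skolemMul (σ : G ≃ G) (c : G) (L : G → Prop) [DecidablePred L] :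
    Option (G × ZMod 3) → Option (G × ZMod 3) → Option (G × ZMod 3)
  | none, none => none
  | none, some (x, i) | some (x, i), none => some (x + c, if L x then i - 1 else i + 1)
  | some (x, i), some (y, j) =>
    if x = y ∧ (L x ∨ i = j) then some (x, -(i + j))
    else if i = j then some (σ (x + y), i + 1)
    else if j = i + 1 then if y = σ (x + x) then none else some (σ.symm y - x, i)
    else if x = σ (y + y) then none else some (σ.symm x - y, j)

variable (σ : G ≃ G) (c : G) (L : G → Prop) [DecidablePred L]

lemma skolemMul_comm (p q : Option (G × ZMod 3)) : skolemMul σ c L p q = skolemMul σ c L q p := by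
  have hne : ∀ i : ZMod 3, i + 1 ≠ i := by decide
  have hne' : ∀ i : ZMod 3, i ≠ i + 1 + 1 := by decide
  rcases p with _ | ⟨x, i⟩ <;> rcases q with _ | ⟨y, j⟩
  · rfl
  · rfl
  · rfl
  by_cases hxy : x = y
  · subst hxy
    simp only [skolemMul, true_and, add_comm j i, @eq_comm _ j i]
    rcases ZMod.eq_or_eq_add_one_or_eq_add_one i j with rfl | rfl | rfl <;> simp [hne, hne']
  rcases ZMod.eq_or_eq_add_one_or_eq_add_one i j with rfl | rfl | rfl <;>
    simp [skolemMul, hxy, Ne.symm hxy, add_comm y x, hne, hne']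

variable {σ c L}
variable (hc : c + c = 0) (hL : ∀ x, L (x + c) ↔ ¬ L x)
  (hσ : ∀ x, σ (x + x) = if L x then x else x + c)
include hσ

lemma skolemMul_cancel_of_level_succ {x y : G} {i : ZMod 3} (hxy : ¬ (x = y ∧ L x)) :
    skolemMul σ c L (some (x, i)) (skolemMul σ c L (some (x, i)) (some (y, i + 1))) =
      some (y, i + 1) := by
  by_cases hy : y = σ (x + x)
  · have hx : ¬ L x := fun hx => hxy ⟨by simpa [hσ, hx] using hy.symm, hx⟩
    simp [skolemMul, hy, hx, hσ]
  · have : x ≠ σ.symm y - x := fun h => hy <| by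
      rwa [eq_sub_iff_add_eq, eq_comm, Equiv.symm_apply_eq] at h
    simp [skolemMul, hxy, hy, this]

include hc hL

lemma skolemMul_cancel_of_level_pred {x y : G} {j : ZMod 3} (hxy : ¬ (x = y ∧ L x)) :
    skolemMul σ c L (some (x, j + 1)) (skolemMul σ c L (some (x, j + 1)) (some (y, j))) =
      some (y, j) := by
  have hne : ∀ i : ZMod 3, i ≠ i + 1 + 1 := by decide
  by_cases hx : x = σ (y + y)
  · have hy : ¬ L y := fun hy => by
      obtain rfl : x = y := by simpa [hσ, hy] using hx
      exact hxy ⟨rfl, hy⟩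
    obtain rfl : x = y + c := by simpa [hσ, hy] using hx
    have hc0 : c ≠ 0 := fun h => by simpa [h] using hL 0
    have hcc : y + c + c = y := by rw [add_assoc, hc, add_zero]
    simp [skolemMul, hy, hL, hcc, hc0, hne, ← hx]
  · have h₁ : ¬ (x = σ.symm x - y ∧ L x) := fun ⟨h, hLx⟩ => hxy ⟨by
      rw [σ.symm_apply_eq.mpr (by rw [hσ, if_pos hLx]), eq_sub_iff_add_eq] at h
      exact (add_left_cancel h).symm, hLx⟩
    have h₂ : x ≠ σ (σ.symm x - y + (σ.symm x - y)) := fun h => hx <| by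
      have : σ (σ.symm x - y + (σ.symm x - y)) = σ (y + (σ.symm x - y)) := by
        rw [← h, add_sub_cancel, Equiv.apply_symm_apply]
      rw [EmbeddingLike.apply_eq_iff_eq, add_left_inj] at this
      rwa [this] at h
    simp [skolemMul, hxy, h₁, h₂, hx, hne]

lemma skolemMul_skolemMul_cancel_left (p q : Option (G × ZMod 3)) :
    skolemMul σ c L p (skolemMul σ c L p q) = q := by
  have hc0 : c ≠ 0 := fun h => by simpa [h] using hL 0
  have hcc : ∀ x, x + c + c = x := fun x => by rw [add_assoc, hc, add_zero]
  rcases p with _ | ⟨x, i⟩ <;> rcases q with _ | ⟨y, j⟩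
  · rfl
  · by_cases hy : L y <;> simp [skolemMul, hy, hL, hcc]
  · have hne : ∀ i : ZMod 3, i ≠ i - 1 ∧ i - 1 ≠ i + 1 := by decide
    by_cases hx : L x <;> simp [skolemMul, hx, hc0, hσ, hL, hcc, hne]
  by_cases hA : x = y ∧ (L x ∨ i = j)
  · obtain ⟨rfl, hx | rfl⟩ := hA
    · simp [skolemMul, hx]
    · have : ∀ i : ZMod 3, -i + -i = i := by decide
      simp [skolemMul, this]
  have hxy : ¬ (x = y ∧ L x) := fun h => hA ⟨h.1, Or.inl h.2⟩
  rcases ZMod.eq_or_eq_add_one_or_eq_add_one i j with rfl | rfl | rfl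
  · have hxy : x ≠ y := fun h => hA ⟨h, Or.inr rfl⟩
    have : ¬ (x = σ (x + y) ∧ L x) := fun ⟨h, hx⟩ => hxy <|
      add_left_cancel (σ.injective (by rw [hσ, if_pos hx, ← h]))
    simp [skolemMul, hxy, Ne.symm hxy, this]
  · exact skolemMul_cancel_of_level_succ hσ hxy
  · exact skolemMul_cancel_of_level_pred hc hL hσ hxy

theorem isSteinerQuasigroup_skolemMul : IsSteinerQuasigroup (skolemMul σ c L) where
  mul_self p := by
    rcases p with _ | ⟨x, i⟩
    · rfl
    have : ∀ i : ZMod 3, -(i + i) = i := by decide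
    simp [skolemMul, this]
  comm := skolemMul_comm σ c L
  mul_mul_cancel_left := skolemMul_skolemMul_cancel_left hc hL hσ

end Skolem

lemma exists_equiv_apply_add_self {G : Type*} [AddCommGroup G] [Finite G]
    (h : Function.Injective fun x : G => x + x) : ∃ σ : G ≃ G, ∀ x, σ (x + x) = x :=
  ⟨(Equiv.ofBijective _ (Finite.injective_iff_bijective.mp h)).symm,
    (Equiv.ofBijective _ _).symm_apply_apply⟩

lemma ZMod.add_self_injective_of_odd (k : ℕ) :
    Function.Injective fun x : ZMod (2 * k + 1) => x + x := by
  have h2 : (2 : ZMod (2 * k + 1)) * (k + 1) = 1 := by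
    have := ZMod.natCast_self (2 * k + 1)
    push_cast at this
    linear_combination this
  intro x y (hxy : x + x = y + y)
  linear_combination (k + 1 : ZMod (2 * k + 1)) * hxy - (x - y) * h2

section HalfIdempotent
variable {k : ℕ}

lemma ZMod.natCast_add_self_two_mul : (k : ZMod (2 * k)) + k = 0 := by
  rw [← two_mul]; exact_mod_cast ZMod.natCast_self (2 * k)

variable [NeZero k]

lemma ZMod.val_add_half (x : ZMod (2 * k)) :
    (x + k).val = if x.val < k then x.val + k else x.val - k := by
  have hk : (k : ZMod (2 * k)).val = k := ZMod.val_cast_of_lt (by have := NeZero.pos k; omega)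
  have hx := x.val_lt
  split_ifs with h
  · rw [ZMod.val_add_of_lt (by omega), hk]
  · have := ZMod.val_add_val_of_le (a := x) (b := k) (by omega)
    omega

lemma ZMod.exists_equiv_apply_add_self_half :
    ∃ σ : ZMod (2 * k) ≃ ZMod (2 * k), ∀ x, σ (x + x) = if x.val < k then x else x + k := by
  -- `δ` doubles `[0, k)` onto the even residues and sends `[k, 2k)` onto the odd ones
  let δ : ZMod (2 * k) → ZMod (2 * k) := fun w =>
    ((if w.val < k then 2 * w.val else 2 * (w.val - k) + 1 : ℕ) : ZMod (2 * k))
  have hδ : Function.Injective δ := fun a b hab => by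
    have ha := a.val_lt
    have hb := b.val_lt
    have := congrArg ZMod.val hab
    simp only [δ] at this
    rw [ZMod.val_cast_of_lt (by split_ifs <;> omega),
      ZMod.val_cast_of_lt (by split_ifs <;> omega)] at this
    exact ZMod.val_injective _ (by split_ifs at this <;> omega)
  have hδ_lt : ∀ w : ZMod (2 * k), w.val < k → δ w = w + w := fun w hw => by
    simp only [δ, if_pos hw]
    push_cast [ZMod.natCast_zmod_val]
    ring
  refine ⟨(Equiv.ofBijective δ (Finite.injective_iff_bijective.mp hδ)).symm, fun x => ?_⟩
  rw [Equiv.symm_apply_eq, Equiv.ofBijective_apply]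
  split_ifs with hx
  · exact (hδ_lt x hx).symm
  · rw [hδ_lt _ (by rw [ZMod.val_add_half, if_neg hx]; have := x.val_lt; omega)]
    linear_combination -ZMod.natCast_add_self_two_mul (k := k)

end HalfIdempotent

theorem exists_isSteinerQuasigroup_fin {n : ℕ} (hn : n % 6 = 1 ∨ n % 6 = 3) :
    ∃ mul : Fin n → Fin n → Fin n, IsSteinerQuasigroup mul := by
  suffices ∃ (α : Type) (_ : Fintype α) (mul : α → α → α),
      Fintype.card α = n ∧ IsSteinerQuasigroup mul by
    obtain ⟨α, _, mul, hcard, h⟩ := this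
    exact ⟨_, h.equivConj (Fintype.equivFinOfCardEq hcard)⟩
  rcases hn with hn | hn
  · obtain ⟨k, rfl⟩ : ∃ k, n = 6 * k + 1 := ⟨n / 6, by omega⟩
    rcases Nat.eq_zero_or_pos k with rfl | hk
    · exact ⟨Unit, inferInstance, fun _ _ => (), rfl, ⟨fun _ => rfl, fun _ _ => rfl, fun _ _ => rfl⟩⟩
    have : NeZero k := ⟨hk.ne'⟩
    obtain ⟨σ, hσ⟩ := ZMod.exists_equiv_apply_add_self_half (k := k)
    refine ⟨Option (ZMod (2 * k) × ZMod 3), inferInstance, skolemMul σ k (·.val < k),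
      by simp [ZMod.card]; ring, isSteinerQuasigroup_skolemMul ZMod.natCast_add_self_two_mul
        (fun x => ?_) hσ⟩
    have := x.val_lt
    rw [ZMod.val_add_half]
    split_ifs <;> omega
  · obtain ⟨k, rfl⟩ : ∃ k, n = 6 * k + 3 := ⟨n / 6, by omega⟩
    obtain ⟨σ, hσ⟩ := exists_equiv_apply_add_self (ZMod.add_self_injective_of_odd k)
    exact ⟨ZMod (2 * k + 1) × ZMod 3, inferInstance, boseMul σ, by simp [ZMod.card]; ring,
      isSteinerQuasigroup_boseMul σ hσ⟩

theorem exists_isSteinerSystem_two_three {n : ℕ} (hn : n % 6 = 1 ∨ n % 6 = 3) :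
    ∃ S : Finset (Finset (Fin n)), IsSteinerSystem 2 3 S :=
  have ⟨_, h⟩ := exists_isSteinerQuasigroup_fin hn
  ⟨_, h.isSteinerSystem_triples⟩

/-- For `n ≥ 3`, the `2`-skeleton of the `n`-cube `Q_n` is factored by boundaries
of `3`-cubes if and only if `n ≡ 1` or `3 (mod 6)`, i.e. exactly when a Steiner
triple system on `n` points exists. -/
theorem cube_two_skeleton_factorization (n : ℕ) (hn : 3 ≤ n) :
    (∃ C : Finset (Fin n → Option Bool),
      (∀ g ∈ C, IsCubeFace n 3 g) ∧
      ∀ f : Fin n → Option Bool, IsCubeFace n 2 f → ∃! g, g ∈ C ∧ FaceContained f g) ↔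
      (n % 6 = 1 ∨ n % 6 = 3) := by
  have : Nonempty (Fin n) := ⟨⟨0, by omega⟩⟩
  refine exists_isSkeletonFactorization_iff.trans ⟨fun ⟨S, hS⟩ => ?_, exists_isSteinerSystem_two_three⟩
  simpa using hS.card_mod_six
end

section
/- For every integer n ≥ 1, there exists a family C of 2-faces of the n-cube Q_n such that every edge (1-face) of Q_n is contained in exactly one member of C — i.e., the edge set of the hypercube graph Q_n partitions into 4-cycles bounding 2-faces — if and only if n is even. -/
/-! The squares of a factorization through a fixed vertex `v` pair up the `n` edges at `v`: each
edge at `v` lies in exactly one of them, and a square through `v` contains exactly the two edges at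
`v` along its free coordinates. Hence `n` is even. Conversely, if `n` is even, pair each coordinate
`i` with `n - 1 - i`; an edge with free coordinate `i` then lies in exactly one square whose free
coordinates form a pair, namely the one freeing `i` and its partner. -/

open Finset Function

theorem Fintype.even_card_of_card_fiber_eq_two {α β : Type*} [Fintype α] [DecidableEq β]
    (f : α → β) (hf : ∀ a, #{b | f b = f a} = 2) : Even (Fintype.card α) := by
  rw [← card_univ, card_eq_sum_card_image f, sum_const_nat (m := 2)]
  · exact ⟨_, mul_two _⟩
  · intro b hb
    obtain ⟨a, -, rfl⟩ := mem_image.1 hb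
    exact hf a

theorem Fin.rev_ne_self_of_even {n : ℕ} (hn : Even n) (i : Fin n) : i.rev ≠ i := by
  obtain ⟨m, rfl⟩ := hn
  intro h
  have := congrArg Fin.val h
  rw [Fin.val_rev] at this
  omega

theorem Finset.pair_eq_pair_of_mem {α : Type*} [DecidableEq α] {σ : α → α}
    (hσ : Involutive σ) {i j : α} (h : i ∈ ({j, σ j} : Finset α)) :
    ({j, σ j} : Finset α) = {i, σ i} := by
  rcases mem_insert.1 h with rfl | h
  · rfl
  · rw [mem_singleton.1 h, hσ, pair_comm]

namespace CubeFace

variable {n : ℕ}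

def freeCoords (f : Fin n → Option Bool) : Finset (Fin n) := {i | f i = none}

def freeOn (S : Finset (Fin n)) (f : Fin n → Option Bool) : Fin n → Option Bool :=
  fun i => if i ∈ S then none else f i

def IsSquareFactorization (C : Finset (Fin n → Option Bool)) : Prop :=
  (∀ g ∈ C, IsCubeFace n 2 g) ∧
    ∀ f : Fin n → Option Bool, IsCubeFace n 1 f → ∃! g, g ∈ C ∧ FaceContained f g

variable {S : Finset (Fin n)} {f g : Fin n → Option Bool} {i : Fin n}

theorem isCubeFace_iff {d : ℕ} : IsCubeFace n d f ↔ #(freeCoords f) = d := Iff.rfl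

@[simp]
theorem mem_freeCoords : i ∈ freeCoords f ↔ f i = none := by
  simp [freeCoords]

@[simp]
theorem freeCoords_freeOn : freeCoords (freeOn S f) = S ∪ freeCoords f := by
  ext i
  by_cases hi : i ∈ S <;> simp [freeOn, hi]

theorem freeCoords_subset_of_faceContained (h : FaceContained f g) :
    freeCoords f ⊆ freeCoords g := by
  intro i hi
  rw [mem_freeCoords] at hi ⊢
  cases hg : g i with
  | none => rfl
  | some b => simpa [hi] using h i b hg

theorem faceContained_freeOn : FaceContained f (freeOn S f) := by
  intro i b h
  by_cases hi : i ∈ S <;> simp_all [freeOn]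

theorem faceContained_iff_freeOn_eq : FaceContained f g ↔ freeOn (freeCoords g) f = g := by
  refine ⟨fun h => funext fun i => ?_, fun h => h ▸ faceContained_freeOn⟩
  cases hg : g i with
  | none => simp [freeOn, hg]
  | some b => simp [freeOn, hg, h i b hg]

theorem faceContained_freeOn_iff :
    FaceContained (freeOn S f) g ↔ FaceContained f g ∧ S ⊆ freeCoords g := by
  refine ⟨fun h => ⟨fun j b hj => faceContained_freeOn j b (h j b hj), ?_⟩,
    fun ⟨h, hS⟩ j b hj => ?_⟩
  · exact subset_union_left.trans (by simpa using freeCoords_subset_of_faceContained h)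
  · have hj' : j ∉ S := fun hjS => by simp [mem_freeCoords.1 (hS hjS)] at hj
    simpa [freeOn, hj'] using h j b hj

def pairedSquares (σ : Fin n → Fin n) : Finset (Fin n → Option Bool) :=
  {g | ∃ i, freeCoords g = {i, σ i}}

@[simp]
theorem mem_pairedSquares {σ : Fin n → Fin n} :
    g ∈ pairedSquares σ ↔ ∃ i, freeCoords g = {i, σ i} := by
  simp [pairedSquares]

theorem isSquareFactorization_pairedSquares {σ : Fin n → Fin n} (hσ : Involutive σ)
    (hfix : ∀ i, σ i ≠ i) : IsSquareFactorization (pairedSquares σ) := by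
  refine ⟨?_, fun f hf => ?_⟩
  · intro g hg
    obtain ⟨i, hi⟩ := mem_pairedSquares.1 hg
    rw [isCubeFace_iff, hi, card_pair (hfix i).symm]
  obtain ⟨i, hi⟩ := card_eq_one.1 (isCubeFace_iff.1 hf)
  have hmem : freeOn {i, σ i} f ∈ pairedSquares σ :=
    mem_pairedSquares.2 ⟨i, by rw [freeCoords_freeOn, hi, union_eq_left.2 (by simp)]⟩
  refine ⟨freeOn {i, σ i} f, ⟨hmem, faceContained_freeOn⟩, ?_⟩
  rintro g ⟨hg, hfg⟩
  obtain ⟨j, hj⟩ := mem_pairedSquares.1 hg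
  have hig : i ∈ freeCoords g := freeCoords_subset_of_faceContained hfg (by simp [hi])
  rw [← faceContained_iff_freeOn_eq.1 hfg, hj, pair_eq_pair_of_mem hσ (hj ▸ hig)]

theorem IsSquareFactorization.even {C : Finset (Fin n → Option Bool)}
    (hC : IsSquareFactorization C) : Even n := by
  set v : Fin n → Option Bool := fun _ => some false
  have hv : freeCoords v = ∅ := by simp [v, freeCoords]
  have edge_isCubeFace (i : Fin n) : IsCubeFace n 1 (freeOn {i} v) := by
    simp [isCubeFace_iff, hv]
  choose square hsquare using fun i => hC.2 _ (edge_isCubeFace i)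
  have square_eq_iff (i j : Fin n) : square j = square i ↔ j ∈ freeCoords (square i) := by
    constructor
    · intro h
      rw [← h]
      exact singleton_subset_iff.1 (faceContained_freeOn_iff.1 (hsquare j).1.2).2
    · intro hj
      refine ((hsquare j).2 _ ⟨(hsquare i).1.1, faceContained_freeOn_iff.2 ⟨?_, ?_⟩⟩).symm
      · exact (faceContained_freeOn_iff.1 (hsquare i).1.2).1
      · exact singleton_subset_iff.2 hj
  have fiber_eq (i : Fin n) : ({j | square j = square i} : Finset _) = freeCoords (square i) := by
    ext j
    simp [square_eq_iff]
  simpa using Fintype.even_card_of_card_fiber_eq_two square fun i => by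
    rw [fiber_eq]
    exact hC.1 _ (hsquare i).1.1

end CubeFace

theorem cube_one_skeleton_factorization_general (n : ℕ) :
    (∃ C : Finset (Fin n → Option Bool),
      (∀ g ∈ C, IsCubeFace n 2 g) ∧
      ∀ f : Fin n → Option Bool, IsCubeFace n 1 f → ∃! g, g ∈ C ∧ FaceContained f g) ↔
      Even n :=
  ⟨fun ⟨_, hC⟩ => CubeFace.IsSquareFactorization.even hC,
    fun hn => ⟨_, CubeFace.isSquareFactorization_pairedSquares Fin.rev_involutive
      (Fin.rev_ne_self_of_even hn)⟩⟩

/-- For `n ≥ 1`, the edge set of the hypercube graph `Q_n` partitions into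
4-cycles bounding 2-faces (i.e. the `1`-skeleton of `Q_n` is factored by
boundaries of `2`-cubes) if and only if `n` is even. -/
theorem cube_one_skeleton_factorization (n : ℕ) (hn : 1 ≤ n) :
    (∃ C : Finset (Fin n → Option Bool),
      (∀ g ∈ C, IsCubeFace n 2 g) ∧
      ∀ f : Fin n → Option Bool, IsCubeFace n 1 f → ∃! g, g ∈ C ∧ FaceContained f g) ↔
      Even n :=
  cube_one_skeleton_factorization_general n
end
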